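/- arXiv:math/9811096 — 2 statements merged into one kernel-verified Lean document; each statement's English description precedes it below -/
import Mathlib

section
/- Distinct Eratosthenes rays with non-prime bases are pairwise disjoint: if a, b are natural numbers that are each either 1 or composite, and a ≠ b, then r(a) ∩ r(b) = ∅, where r(a) = { e(a,k) : k ≥ 1 } and e iterates m ↦ p_m. -/
open Nat

/-- The n-th prime number, 1-indexed: `nthPrime 1 = 2`. -/
noncomputable def nthPrime (n : ℕ) : ℕ := Nat.nth Nat.Prime (n - 1)


/-- The Eratosthenes progression of base `a`: `erat a 0 = a`,
`erat a (k+1) = nthPrime (erat a k)`. -/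
noncomputable def erat (a : ℕ) : ℕ → ℕ
  | 0 => a
  | k + 1 => nthPrime (erat a k)


/-- The Eratosthenes ray of base `a`: the set of all iterates `erat a k` for `k ≥ 1`. -/
noncomputable def ray (a : ℕ) : Set ℕ := {m | ∃ k, 1 ≤ k ∧ erat a k = m}

/-! The map `m ↦ p_m` is injective on positive integers, and all iterates after the base are
prime. So if `e(a,k) = e(b,l)` with `k ≤ l`, cancelling `k` steps gives `a = e(b, l - k)`;
since `a` is not prime, `l = k` and hence `a = b`. Positivity of the bases matters because
`nthPrime 0 = nthPrime 1 = 2` in this encoding. -/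

lemma nthPrime_prime (n : ℕ) : (nthPrime n).Prime :=
  Nat.prime_nth_prime _

lemma nthPrime_injOn : Set.InjOn nthPrime {n | 1 ≤ n} := by
  intro m hm n hn h
  have := Nat.nth_injective Nat.infinite_setOfPred_prime h
  simp only [Set.mem_ofPred_eq] at hm hn
  omega

lemma erat_succ_prime (a k : ℕ) : (erat a (k + 1)).Prime :=
  nthPrime_prime _

lemma one_le_erat {a : ℕ} (ha : 1 ≤ a) : ∀ k, 1 ≤ erat a k
  | 0 => ha
  | k + 1 => (erat_succ_prime a k).one_lt.le

lemma erat_add (a k l : ℕ) : erat a (k + l) = erat (erat a l) k := by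
  induction k with
  | zero => simp [erat]
  | succ k ih => rw [Nat.succ_add, erat, ih, erat]

lemma erat_injOn (k : ℕ) : Set.InjOn (erat · k) {n | 1 ≤ n} := by
  induction k with
  | zero => exact fun _ _ _ _ h => h
  | succ k ih =>
    intro u hu v hv h
    exact ih hu hv (nthPrime_injOn (one_le_erat hu k) (one_le_erat hv k) h)

lemma eq_of_erat_eq_erat_add {a b k d : ℕ} (ha : 1 ≤ a ∧ ¬ a.Prime) (hb : 1 ≤ b)
    (h : erat a k = erat b (k + d)) : a = b := by
  rw [erat_add] at h
  have had : a = erat b d := erat_injOn k ha.1 (one_le_erat hb d) h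
  cases d with
  | zero => exact had
  | succ d => exact absurd (had ▸ erat_succ_prime b d) ha.2

theorem principal_rays_disjoint (a b : ℕ)
    (ha : 1 ≤ a ∧ ¬ a.Prime) (hb : 1 ≤ b ∧ ¬ b.Prime) (hab : a ≠ b) :
    ray a ∩ ray b = ∅ := by
  refine Set.eq_empty_iff_forall_notMem.mpr fun x ⟨⟨k, _, hxa⟩, ⟨l, _, hxb⟩⟩ => ?_
  rcases le_total k l with hkl | hlk
  · obtain ⟨d, rfl⟩ := Nat.exists_eq_add_of_le hkl
    exact hab (eq_of_erat_eq_erat_add ha hb.1 (hxa.trans hxb.symm))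
  · obtain ⟨d, rfl⟩ := Nat.exists_eq_add_of_le hlk
    exact hab (eq_of_erat_eq_erat_add hb ha.1 (hxb.trans hxa.symm)).symm
end

section
/- For every base a ≥ 1, the series ∑_{k=1}^∞ 1/e(a,k) converges, where e(a,0) = a and e(a,k+1) = p_{e(a,k)} with p_m the m-th prime. -/
open Nat

/-!
All primes but the first are odd, so consecutive primes after `2` differ by at least
`2`, whence `p_m ≥ 2m - 1`. Applied along the progression this doubles the terms at every step,
so `e(a, k) > 2^(k-1)` and the series is dominated by a geometric one.
-/

theorem Nat.nth_prime_add_two_le_nth_prime_succ {n : ℕ} (hn : n ≠ 0) :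
    nth Prime n + 2 ≤ nth Prime (n + 1) := by
  have hlt : nth Prime n < nth Prime (n + 1) :=
    nth_strictMono infinite_setOfPred_prime n.lt_succ_self
  have hodd (m : ℕ) (hm : m ≠ 0) : Odd (nth Prime m) :=
    (prime_nth_prime m).odd_of_ne_two (by have := add_two_le_nth_prime m; omega)
  obtain ⟨p, hp⟩ := hodd n hn
  obtain ⟨q, hq⟩ := hodd (n + 1) n.succ_ne_zero
  omega

theorem Nat.two_mul_add_one_le_nth_prime (n : ℕ) : 2 * n + 1 ≤ nth Prime n := by
  induction n with
  | zero => simp [nth_prime_zero_eq_two]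
  | succ n ih =>
    rcases eq_or_ne n 0 with rfl | hn
    · simp [nth_prime_one_eq_three]
    · have := nth_prime_add_two_le_nth_prime_succ hn
      omega

theorem two_mul_le_nthPrime_add_one (m : ℕ) : 2 * m ≤ nthPrime m + 1 := by
  cases m with
  | zero => simp
  | succ n =>
    have := Nat.two_mul_add_one_le_nth_prime n
    simp only [nthPrime, add_tsub_cancel_right]
    omega

theorem two_pow_add_one_le_erat_succ (a k : ℕ) : 2 ^ k + 1 ≤ erat a (k + 1) := by
  induction k with
  | zero => simpa [erat, nthPrime] using (prime_nth_prime (a - 1)).two_le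
  | succ k ih =>
    have := two_mul_le_nthPrime_add_one (erat a (k + 1))
    rw [erat, pow_succ]
    omega

theorem summable_inv_erat_general (a : ℕ) :
    Summable (fun k : ℕ => (1 : ℝ) / erat a (k + 1)) := by
  refine summable_geometric_two.of_nonneg_of_le (fun k => by positivity) fun k => ?_
  have hle : (2 : ℝ) ^ k ≤ erat a (k + 1) := by
    exact_mod_cast (two_pow_add_one_le_erat_succ a k).trans' (Nat.le_succ _)
  rw [one_div_pow]
  exact one_div_le_one_div_of_le (by positivity) hle

theorem summable_inv_erat (a : ℕ) (ha : 1 ≤ a) :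
    Summable (fun k : ℕ => (1 : ℝ) / erat a (k + 1)) :=
  summable_inv_erat_general a
end
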